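/- arXiv:2107.03022 — 3 statements merged into one kernel-verified Lean document; each statement's English description precedes it below -/
import Mathlib

section
/- Fix τ > 0 and N ≥ 1. Define θᵢ = (1 + 3^{2^i·N·τ})^{-1} for i ∈ {1,...,N}. Then for the Itakura–Saito divergence loss f(σ,θ) = (1/N)·(Σ_{i:σᵢ=1}(1/θᵢ + ln θᵢ − 1) + Σ_{i:σᵢ=0}(1/(1−θᵢ) + ln(1−θᵢ) − 1)), any two distinct σ₁, σ₂ ∈ {0,1}^N satisfy |f(σ₁,θ) − f(σ₂,θ)| ≥ 2τ. -/
noncomputable def hIS (x : ℝ) : ℝ := (3:ℝ)^x - (3:ℝ)^(-x) - x * Real.log 3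

lemma log3_ge_one : (1:ℝ) ≤ Real.log 3 := by
  rw [show (1:ℝ) = Real.log (Real.exp 1) by simp]
  exact Real.log_le_log (Real.exp_pos 1) (by linarith [Real.exp_one_lt_d9])

lemma hIS_ge (x : ℝ) (hx : 0 ≤ x) : x * Real.log 3 ≤ hIS x := by
  have h3 : (0:ℝ) < 3 := by norm_num
  have e1 : (3:ℝ)^x = Real.exp (x * Real.log 3) := by
    rw [Real.rpow_def_of_pos h3]; ring_nf
  have e2 : (3:ℝ)^(-x) = Real.exp (-(x * Real.log 3)) := by
    rw [Real.rpow_def_of_pos h3]; ring_nf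
  have ht : 0 ≤ x * Real.log 3 := mul_nonneg hx (by linarith [log3_ge_one])
  have hs : x * Real.log 3 ≤ Real.sinh (x * Real.log 3) := Real.self_le_sinh_iff.mpr ht
  rw [Real.sinh_eq] at hs
  unfold hIS; rw [e1, e2]; linarith

lemma hIS_nonneg (x : ℝ) (hx : 0 ≤ x) : 0 ≤ hIS x :=
  le_trans (mul_nonneg hx (by linarith [log3_ge_one])) (hIS_ge x hx)

lemma hIS_self_le (x : ℝ) (hx : 0 ≤ x) : x ≤ hIS x := by
  have := hIS_ge x hx
  nlinarith [log3_ge_one]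

lemma key_ineq (u : ℝ) (hu : 1 ≤ u) : 2*(u - u⁻¹) ≤ u*u - (u*u)⁻¹ := by
  have hu0 : (0:ℝ) < u := by linarith
  have h4 : 0 ≤ (u-1)^3 * (u+1) :=
    mul_nonneg (pow_nonneg (by linarith) 3) (by linarith)
  have hne : u ≠ 0 := ne_of_gt hu0
  have e1 : 2*(u - u⁻¹)*(u*u) = 2*u^3 - 2*u := by field_simp
  have e2 : (u*u - (u*u)⁻¹)*(u*u) = u^4 - 1 := by field_simp
  have key : 2*(u - u⁻¹)*(u*u) ≤ (u*u - (u*u)⁻¹)*(u*u) := by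
    rw [e1, e2]; nlinarith [h4]
  have hc : (u*u) * (u*u)⁻¹ = 1 := mul_inv_cancel₀ (by positivity)
  have := mul_le_mul_of_nonneg_right key (le_of_lt (inv_pos.mpr (by positivity : (0:ℝ) < u*u)))
  calc 2*(u-u⁻¹) = 2*(u - u⁻¹) * ((u*u) * (u*u)⁻¹) := by rw [hc, mul_one]
    _ = 2*(u - u⁻¹) * (u*u) * (u*u)⁻¹ := by ring
    _ ≤ (u*u - (u*u)⁻¹) * (u*u) * (u*u)⁻¹ := this
    _ = (u*u - (u*u)⁻¹) * ((u*u) * (u*u)⁻¹) := by ring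
    _ = u*u - (u*u)⁻¹ := by rw [hc, mul_one]

lemma hIS_double (x : ℝ) (hx : 0 ≤ x) : 2 * hIS x ≤ hIS (2*x) := by
  have hu1 : (1:ℝ) ≤ (3:ℝ)^x := Real.one_le_rpow (by norm_num) hx
  have e1 : (3:ℝ)^(2*x) = (3:ℝ)^x * (3:ℝ)^x := by
    rw [two_mul, Real.rpow_add (by norm_num)]
  have e2 : (3:ℝ)^(-(2*x)) = ((3:ℝ)^x * (3:ℝ)^x)⁻¹ := by
    rw [Real.rpow_neg (by norm_num), e1]
  have e3 : (3:ℝ)^(-x) = ((3:ℝ)^x)⁻¹ := by rw [Real.rpow_neg (by norm_num)]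
  unfold hIS
  rw [e1, e2, e3]
  have := key_ineq ((3:ℝ)^x) hu1
  linarith

lemma key_sum (a : ℝ) (ha : 0 < a) :
    ∀ j : ℕ, (∑ k ∈ Finset.range j, hIS ((2:ℝ)^(k+1) * a)) + 2*a ≤ hIS ((2:ℝ)^(j+1) * a) := by
  intro j
  induction j with
  | zero =>
    simp only [Finset.range_zero, Finset.sum_empty, zero_add]
    have := hIS_self_le (2*a) (by linarith)
    calc 2*a ≤ hIS (2*a) := this
      _ = hIS ((2:ℝ)^(0+1) * a) := by norm_num
  | succ n ih =>
    rw [Finset.sum_range_succ]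
    have hb : (0:ℝ) ≤ (2:ℝ)^(n+1) * a := by positivity
    have hd := hIS_double ((2:ℝ)^(n+1) * a) hb
    have he : (2:ℝ) * ((2:ℝ)^(n+1) * a) = (2:ℝ)^(n+1+1) * a := by ring
    rw [he] at hd
    linarith


lemma pq_diff (b : ℝ) :
    (1/((1 + (3:ℝ)^b)⁻¹) + Real.log ((1 + (3:ℝ)^b)⁻¹) - 1)
      - (1/(1 - (1 + (3:ℝ)^b)⁻¹) + Real.log (1 - (1 + (3:ℝ)^b)⁻¹) - 1)
    = hIS b := by
  have ht : (0:ℝ) < (3:ℝ)^b := Real.rpow_pos_of_pos (by norm_num) b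
  have h1 : (0:ℝ) < 1 + (3:ℝ)^b := by linarith
  have e0 : 1 - (1 + (3:ℝ)^b)⁻¹ = (3:ℝ)^b/(1 + (3:ℝ)^b) := by
    field_simp
    ring
  have e1 : 1/((1 + (3:ℝ)^b)⁻¹) = 1 + (3:ℝ)^b := by
    field_simp
  have e2 : 1/((3:ℝ)^b/(1 + (3:ℝ)^b)) = 1 + (3:ℝ)^(-b) := by
    rw [Real.rpow_neg (by norm_num)]
    field_simp
    ring
  have e3 : Real.log ((1 + (3:ℝ)^b)⁻¹) = - Real.log (1 + (3:ℝ)^b) := Real.log_inv _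
  have e4 : Real.log ((3:ℝ)^b/(1 + (3:ℝ)^b)) = b * Real.log 3 - Real.log (1 + (3:ℝ)^b) := by
    rw [Real.log_div (ne_of_gt ht) (ne_of_gt h1), Real.log_rpow (by norm_num)]
  rw [e0, e1, e2, e3, e4]
  unfold hIS
  ring

lemma fin2 : ∀ a : Fin 2, a = 0 ∨ a = 1 := by decide

theorem stmt_9 (N : ℕ) (hN : 1 ≤ N) (τ : ℝ) (hτ : 0 < τ)
    (θ : Fin N → ℝ)
    (hθ : ∀ i, θ i = (1 + (3 : ℝ) ^ (((2 : ℝ) ^ ((i : ℕ) + 1)) * N * τ))⁻¹)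
    (f : (Fin N → Fin 2) → ℝ)
    (hf : ∀ σ, f σ = (1 / (N : ℝ)) *
      ((∑ i ∈ Finset.univ.filter fun i => σ i = 1,
          (1 / θ i + Real.log (θ i) - 1)) +
        ∑ i ∈ Finset.univ.filter fun i => σ i = 0,
          (1 / (1 - θ i) + Real.log (1 - θ i) - 1))) :
    ∀ σ₁ σ₂ : Fin N → Fin 2, σ₁ ≠ σ₂ → 2 * τ ≤ |f σ₁ - f σ₂| := by
  intro σ₁ σ₂ hne
  have hNpos : (0:ℝ) < (N:ℝ) := by exact_mod_cast Nat.lt_of_lt_of_le Nat.zero_lt_one hN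
  set p : Fin N → ℝ := fun i => 1/θ i + Real.log (θ i) - 1 with hp
  set q : Fin N → ℝ := fun i => 1/(1 - θ i) + Real.log (1 - θ i) - 1 with hq
  set b : Fin N → ℝ := fun i => (2:ℝ)^((i:ℕ)+1) * N * τ with hb
  have hbnn : ∀ i, 0 ≤ b i := by intro i; simp only [hb]; positivity
  have hpq : ∀ i, p i - q i = hIS (b i) := by
    intro i
    simp only [hp, hq, hb, hθ i]
    exact pq_diff _
  have hsplit : ∀ σ : Fin N → Fin 2,
      f σ = (1/(N:ℝ)) * ∑ i : Fin N, (if σ i = 1 then p i else q i) := by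
    intro σ
    rw [hf σ]
    congr 1
    rw [Finset.sum_filter, Finset.sum_filter, ← Finset.sum_add_distrib]
    apply Finset.sum_congr rfl
    intro i _
    rcases fin2 (σ i) with h | h <;>
      simp [h, hp, hq, one_div, show (1:Fin 2) ≠ 0 by decide, show (0:Fin 2) ≠ 1 by decide]
  set c : Fin N → ℝ := fun i =>
    (if σ₁ i = 1 then p i else q i) - (if σ₂ i = 1 then p i else q i) with hc
  have hdiff : f σ₁ - f σ₂ = (1/(N:ℝ)) * ∑ i, c i := by
    rw [hsplit σ₁, hsplit σ₂, ← mul_sub, ← Finset.sum_sub_distrib]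
  -- the set of differing coordinates
  set D : Finset (Fin N) := Finset.univ.filter (fun i => σ₁ i ≠ σ₂ i) with hD
  have hDne : D.Nonempty := by
    obtain ⟨i, hi⟩ := Function.ne_iff.mp hne
    exact ⟨i, by simp [hD, hi]⟩
  set j : Fin N := D.max' hDne with hj
  have hjD : j ∈ D := D.max'_mem hDne
  have hjne : σ₁ j ≠ σ₂ j := by simpa [hD] using hjD
  -- c at index not in D is 0
  have hczero : ∀ i, σ₁ i = σ₂ i → c i = 0 := by
    intro i hi; simp [hc, hi]
  -- |c i| ≤ hIS (b i) always
  have habs : ∀ i, |c i| ≤ hIS (b i) := by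
    intro i
    by_cases hi : σ₁ i = σ₂ i
    · rw [hczero i hi, abs_zero]; exact hIS_nonneg _ (hbnn i)
    · rcases fin2 (σ₁ i) with h1 | h1 <;> rcases fin2 (σ₂ i) with h2 | h2
      · exact absurd (h1.trans h2.symm) hi
      · have : c i = q i - p i := by
          simp [hc, h1, h2, show (0:Fin 2) ≠ 1 by decide]
        rw [this, abs_sub_comm, hpq i, abs_of_nonneg (hIS_nonneg _ (hbnn i))]
      · have : c i = p i - q i := by
          simp [hc, h1, h2, show (0:Fin 2) ≠ 1 by decide]
        rw [this, hpq i, abs_of_nonneg (hIS_nonneg _ (hbnn i))]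
      · exact absurd (h1.trans h2.symm) hi
  -- |c j| = hIS (b j)
  have hcj : |c j| = hIS (b j) := by
    rcases fin2 (σ₁ j) with h1 | h1 <;> rcases fin2 (σ₂ j) with h2 | h2
    · exact absurd (h1.trans h2.symm) hjne
    · have : c j = q j - p j := by
        simp [hc, h1, h2, show (0:Fin 2) ≠ 1 by decide]
      rw [this, abs_sub_comm, hpq j, abs_of_nonneg (hIS_nonneg _ (hbnn j))]
    · have : c j = p j - q j := by
        simp [hc, h1, h2, show (0:Fin 2) ≠ 1 by decide]
      rw [this, hpq j, abs_of_nonneg (hIS_nonneg _ (hbnn j))]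
    · exact absurd (h1.trans h2.symm) hjne
  -- bound the rest
  have hrest : ∑ i ∈ Finset.univ.erase j, |c i|
      ≤ ∑ k ∈ Finset.range (j:ℕ), hIS ((2:ℝ)^(k+1) * ((N:ℝ)*τ)) := by
    have step1 : ∑ i ∈ Finset.univ.erase j, |c i|
        ≤ ∑ i ∈ Finset.univ.erase j, (if (i:ℕ) < (j:ℕ) then hIS (b i) else 0) := by
      apply Finset.sum_le_sum
      intro i hi
      have hij : i ≠ j := (Finset.mem_erase.mp hi).1
      by_cases hlt : (i:ℕ) < (j:ℕ)
      · simpa [hlt] using habs i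
      · simp only [hlt, if_false]
        have hiD : σ₁ i = σ₂ i := by
          by_contra hcon
          have : i ∈ D := by simp [hD, hcon]
          have := D.le_max' i this
          have : (i:ℕ) ≤ (j:ℕ) := this
          have : (i:ℕ) < (j:ℕ) := lt_of_le_of_ne this (fun h => hij (Fin.ext h))
          exact hlt this
        rw [hczero i hiD, abs_zero]
    have step2 : ∑ i ∈ Finset.univ.erase j, (if (i:ℕ) < (j:ℕ) then hIS (b i) else 0)
        ≤ ∑ i : Fin N, (if (i:ℕ) < (j:ℕ) then hIS (b i) else 0) := by
      apply Finset.sum_le_sum_of_subset_of_nonneg (Finset.erase_subset _ _)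
      intro i _ _
      by_cases hlt : (i:ℕ) < (j:ℕ) <;> simp [hlt, hIS_nonneg _ (hbnn i)]
    have step3 : ∑ i : Fin N, (if (i:ℕ) < (j:ℕ) then hIS (b i) else 0)
        = ∑ k ∈ Finset.range N, (if k < (j:ℕ) then hIS ((2:ℝ)^(k+1) * N * τ) else 0) := by
      exact Fin.sum_univ_eq_sum_range (fun k => if k < (j:ℕ) then hIS ((2:ℝ)^(k+1) * N * τ) else 0) N
    have step4 : ∑ k ∈ Finset.range N, (if k < (j:ℕ) then hIS ((2:ℝ)^(k+1) * N * τ) else 0)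
        ≤ ∑ k ∈ Finset.range (j:ℕ), hIS ((2:ℝ)^(k+1) * ((N:ℝ)*τ)) := by
      rw [← Finset.sum_filter]
      have hsub : (Finset.range N).filter (fun k => k < (j:ℕ)) ⊆ Finset.range (j:ℕ) := by
        intro k hk
        simp only [Finset.mem_filter, Finset.mem_range] at hk ⊢
        exact hk.2
      calc ∑ k ∈ (Finset.range N).filter (fun k => k < (j:ℕ)), hIS ((2:ℝ)^(k+1) * N * τ)
          ≤ ∑ k ∈ Finset.range (j:ℕ), hIS ((2:ℝ)^(k+1) * N * τ) := by
            apply Finset.sum_le_sum_of_subset_of_nonneg hsub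
            intro k _ _
            exact hIS_nonneg _ (by positivity)
        _ = ∑ k ∈ Finset.range (j:ℕ), hIS ((2:ℝ)^(k+1) * ((N:ℝ)*τ)) := by
            apply Finset.sum_congr rfl; intro k _; rw [mul_assoc]
    linarith [step1, step2, step3.le, step4]
  have hkey := key_sum ((N:ℝ)*τ) (by positivity) (j:ℕ)
  have hbj : hIS ((2:ℝ)^((j:ℕ)+1) * ((N:ℝ)*τ)) = hIS (b j) := by
    simp only [hb]; rw [mul_assoc]
  -- main bound on the sum
  have hsum : 2 * (N:ℝ) * τ ≤ |∑ i, c i| := by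
    have hsplit' : ∑ i, c i = c j + ∑ i ∈ Finset.univ.erase j, c i :=
      (Finset.add_sum_erase _ _ (Finset.mem_univ j)).symm
    have htri : |∑ i ∈ Finset.univ.erase j, c i| ≤ ∑ i ∈ Finset.univ.erase j, |c i| :=
      Finset.abs_sum_le_sum_abs _ _
    have h1 : |c j| - |∑ i ∈ Finset.univ.erase j, c i| ≤ |∑ i, c i| := by
      rw [hsplit']
      have := abs_add_le (∑ i, c i) 0
      calc |c j| - |∑ i ∈ Finset.univ.erase j, c i|
          ≤ |c j + ∑ i ∈ Finset.univ.erase j, c i| := by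
            have := abs_sub_abs_le_abs_sub (c j) (-(∑ i ∈ Finset.univ.erase j, c i))
            simp only [abs_neg, sub_neg_eq_add] at this
            linarith
        _ = |c j + ∑ i ∈ Finset.univ.erase j, c i| := rfl
    rw [hcj] at h1
    rw [hbj] at hkey
    have : 2 * ((N:ℝ)*τ) ≤ hIS (b j) - ∑ i ∈ Finset.univ.erase j, |c i| := by linarith
    linarith [h1, htri, this]
  -- conclude
  rw [hdiff, abs_mul, abs_of_pos (by positivity : (0:ℝ) < 1/(N:ℝ))]
  have : 1/(N:ℝ) * (2 * (N:ℝ) * τ) = 2 * τ := by field_simp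
  calc 2 * τ = 1/(N:ℝ) * (2 * (N:ℝ) * τ) := this.symm
    _ ≤ 1/(N:ℝ) * |∑ i, c i| := by
        apply mul_le_mul_of_nonneg_left hsum (by positivity)
end

section
/- For all x ∈ (0, 1/2), it holds that 1/x − 1/(1−x) + ln(x/(1−x)) > ln((1−x)/x) > 0. -/
lemma key_aux : StrictMonoOn (fun t : ℝ => t - t⁻¹ - 2 * Real.log t) (Set.Ici 1) := by
  apply strictMonoOn_of_deriv_pos (convex_Ici 1)
  · apply ContinuousOn.sub (ContinuousOn.sub continuousOn_id ?_) ?_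
    · exact ContinuousOn.inv₀ continuousOn_id (fun t ht => by
        have : (1:ℝ) ≤ t := ht
        linarith)
    · exact ContinuousOn.mul continuousOn_const (Real.continuousOn_log.mono (by
        intro t ht
        have : (1:ℝ) ≤ t := ht
        simp; linarith))
  · intro t ht
    rw [interior_Ici] at ht
    have ht1 : (1:ℝ) < t := ht
    have ht0 : t ≠ 0 := by linarith
    have hd : HasDerivAt (fun t : ℝ => t - t⁻¹ - 2 * Real.log t)
        (1 - (-(t^2)⁻¹) - 2 * t⁻¹) t := by
      exact ((hasDerivAt_id t).sub (hasDerivAt_inv ht0)).sub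
        ((Real.hasDerivAt_log ht0).const_mul 2)
    rw [hd.deriv]
    have hinv : t⁻¹ < 1 := by
      rw [inv_lt_one_iff₀]; right; exact ht1
    have h2 : (t^2)⁻¹ = t⁻¹ * t⁻¹ := by
      rw [sq, mul_inv]
    rw [h2]
    nlinarith [sq_nonneg (1 - t⁻¹), mul_pos (inv_pos.mpr (by linarith : (0:ℝ) < t)) (inv_pos.mpr (by linarith : (0:ℝ) < t))]

lemma key (t : ℝ) (ht : 1 < t) : 2 * Real.log t < t - t⁻¹ := by
  have h := key_aux (Set.self_mem_Ici) (Set.mem_Ici.mpr ht.le) ht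
  simp only [Real.log_one] at h
  norm_num at h
  linarith

theorem stmt_10 (x : ℝ) (hx : x ∈ Set.Ioo (0 : ℝ) (1 / 2)) :
    Real.log ((1 - x) / x) < 1 / x - 1 / (1 - x) + Real.log (x / (1 - x)) ∧
      0 < Real.log ((1 - x) / x) := by
  obtain ⟨hx0, hx2⟩ := hx
  have hx1 : x < 1 - x := by linarith
  have hx1' : (0:ℝ) < 1 - x := by linarith
  have ht : 1 < (1 - x) / x := (one_lt_div hx0).mpr hx1
  have hk := key _ ht
  have hinv : ((1 - x) / x)⁻¹ = x / (1 - x) := by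
    rw [inv_div]
  have hlog : Real.log (x / (1 - x)) = -Real.log ((1 - x) / x) := by
    rw [← hinv, Real.log_inv]
  constructor
  · rw [hlog]
    have heq : (1 - x) / x - ((1 - x) / x)⁻¹ = 1 / x - 1 / (1 - x) := by
      rw [hinv]; field_simp; ring
    linarith [heq ▸ hk]
  · exact Real.log_pos ht
end

section
/- Let p₁ < p₂ < ... < p_N be the first N primes and set θᵢ = (1/2)·(1 − (ln pᵢ)/N) for i ∈ [N] (assume N large enough that θᵢ ∈ (0,1)). Then the squared Euclidean loss f(σ,θ) = (1/N)·(Σ_{i:σᵢ=1}(1−θᵢ)² + Σ_{i:σᵢ=0}θᵢ²) is injective as a function of σ ∈ {0,1}^N. -/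
open Finset

lemma prod_nth_prime_mem {N : ℕ} (S T : Finset (Fin N))
    (h : ∏ i ∈ S, Nat.nth Nat.Prime (i : ℕ) = ∏ i ∈ T, Nat.nth Nat.Prime (i : ℕ)) :
    ∀ i ∈ S, i ∈ T := by
  intro i hi
  have hp : ∀ j : Fin N, Nat.Prime (Nat.nth Nat.Prime (j : ℕ)) :=
    fun j => Nat.prime_nth_prime _
  have hdvd : Nat.nth Nat.Prime (i : ℕ) ∣ ∏ j ∈ T, Nat.nth Nat.Prime (j : ℕ) := by
    rw [← h]; exact Finset.dvd_prod_of_mem _ hi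
  obtain ⟨j, hj, hdj⟩ := (hp i).prime.exists_mem_finset_dvd hdvd
  have heq : Nat.nth Nat.Prime (i : ℕ) = Nat.nth Nat.Prime (j : ℕ) :=
    (Nat.prime_dvd_prime_iff_eq (hp i) (hp j)).mp hdj
  have hij : (i : ℕ) = (j : ℕ) :=
    Nat.nth_injective Nat.infinite_setOf_prime heq
  rwa [show i = j from Fin.val_injective hij]

theorem stmt_11 (N : ℕ) (hN : 1 ≤ N)
    (θ : Fin N → ℝ)
    (hθ : ∀ i, θ i = (1 / 2) * (1 - Real.log (Nat.nth Nat.Prime (i : ℕ)) / N))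
    (hθ01 : ∀ i, θ i ∈ Set.Ioo (0 : ℝ) 1)
    (f : (Fin N → Fin 2) → ℝ)
    (hf : ∀ σ, f σ = (1 / (N : ℝ)) *
      ((∑ i ∈ Finset.univ.filter fun i => σ i = 1, (1 - θ i) ^ 2) +
        ∑ i ∈ Finset.univ.filter fun i => σ i = 0, (θ i) ^ 2)) :
    Function.Injective f := by
  have hNpos : (0 : ℝ) < N := by exact_mod_cast hN
  have hsplit : ∀ σ : Fin N → Fin 2,
      ((∑ i ∈ Finset.univ.filter fun i => σ i = 1, (1 - θ i) ^ 2) +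
        ∑ i ∈ Finset.univ.filter fun i => σ i = 0, (θ i) ^ 2)
      = (∑ i, (θ i) ^ 2) + ∑ i ∈ Finset.univ.filter fun i => σ i = 1,
          Real.log (Nat.nth Nat.Prime (i : ℕ)) / N := by
    intro σ
    have h01 : ∀ x : Fin 2, x = 0 ↔ ¬ x = 1 := by decide
    have h0 : (Finset.univ.filter fun i => σ i = 0)
        = Finset.univ.filter fun i => ¬ σ i = 1 := by
      apply Finset.filter_congr; intro i _; exact h01 (σ i)
    have hsum : (∑ i ∈ Finset.univ.filter fun i => σ i = 1, (θ i) ^ 2)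
        + ∑ i ∈ Finset.univ.filter (fun i => ¬ σ i = 1), (θ i) ^ 2
        = ∑ i, (θ i) ^ 2 := Finset.sum_filter_add_sum_filter_not _ _ _
    have hterm : ∀ i : Fin N, (1 - θ i) ^ 2 = (θ i) ^ 2 +
        Real.log (Nat.nth Nat.Prime (i : ℕ)) / N := by
      intro i
      have := hθ i
      nlinarith [hθ i]
    rw [h0]
    calc (∑ i ∈ Finset.univ.filter fun i => σ i = 1, (1 - θ i) ^ 2) +
          ∑ i ∈ Finset.univ.filter (fun i => ¬ σ i = 1), (θ i) ^ 2
        = (∑ i ∈ Finset.univ.filter fun i => σ i = 1,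
            ((θ i) ^ 2 + Real.log (Nat.nth Nat.Prime (i : ℕ)) / N)) +
          ∑ i ∈ Finset.univ.filter (fun i => ¬ σ i = 1), (θ i) ^ 2 := by
          rw [Finset.sum_congr rfl (fun i _ => hterm i)]
      _ = ((∑ i ∈ Finset.univ.filter fun i => σ i = 1, (θ i) ^ 2)
            + ∑ i ∈ Finset.univ.filter (fun i => ¬ σ i = 1), (θ i) ^ 2)
          + ∑ i ∈ Finset.univ.filter fun i => σ i = 1,
              Real.log (Nat.nth Nat.Prime (i : ℕ)) / N := by
          rw [Finset.sum_add_distrib]; ring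
      _ = _ := by rw [hsum]
  intro σ₁ σ₂ hEq
  have hA : (∑ i ∈ Finset.univ.filter fun i => σ₁ i = 1,
        Real.log (Nat.nth Nat.Prime (i : ℕ)))
      = ∑ i ∈ Finset.univ.filter fun i => σ₂ i = 1,
        Real.log (Nat.nth Nat.Prime (i : ℕ)) := by
    have h1 := hf σ₁
    have h2 := hf σ₂
    rw [hsplit σ₁] at h1
    rw [hsplit σ₂] at h2
    rw [h1, h2] at hEq
    have hNne : (N : ℝ) ≠ 0 := ne_of_gt hNpos
    have hdiv : (∑ i ∈ Finset.univ.filter fun i => σ₁ i = 1,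
        Real.log (Nat.nth Nat.Prime (i : ℕ)) / N)
      = ∑ i ∈ Finset.univ.filter fun i => σ₂ i = 1,
        Real.log (Nat.nth Nat.Prime (i : ℕ)) / N := by
      field_simp at hEq
      linarith [hEq]
    rw [← Finset.sum_div, ← Finset.sum_div, div_eq_div_iff hNne hNne] at hdiv
    exact mul_right_cancel₀ hNne hdiv
  -- convert to products of primes
  have hpne : ∀ i : Fin N, ((Nat.nth Nat.Prime (i : ℕ) : ℝ)) ≠ 0 := by
    intro i
    exact_mod_cast (Nat.prime_nth_prime (i : ℕ)).pos.ne'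
  have hlogprod : ∀ σ : Fin N → Fin 2,
      (∑ i ∈ Finset.univ.filter fun i => σ i = 1,
        Real.log (Nat.nth Nat.Prime (i : ℕ)))
      = Real.log ((∏ i ∈ Finset.univ.filter fun i => σ i = 1,
          Nat.nth Nat.Prime (i : ℕ) : ℕ) : ℝ) := by
    intro σ
    rw [Nat.cast_prod, Real.log_prod (fun i _ => hpne i)]
  rw [hlogprod σ₁, hlogprod σ₂] at hA
  have hprodpos : ∀ σ : Fin N → Fin 2,
      (0 : ℝ) < ((∏ i ∈ Finset.univ.filter fun i => σ i = 1,
        Nat.nth Nat.Prime (i : ℕ) : ℕ) : ℝ) := by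
    intro σ
    have : 0 < ∏ i ∈ Finset.univ.filter fun i => σ i = 1,
        Nat.nth Nat.Prime (i : ℕ) :=
      Finset.prod_pos (fun i _ => (Nat.prime_nth_prime (i : ℕ)).pos)
    exact_mod_cast this
  have hprod : (∏ i ∈ Finset.univ.filter fun i => σ₁ i = 1,
      Nat.nth Nat.Prime (i : ℕ))
      = ∏ i ∈ Finset.univ.filter fun i => σ₂ i = 1, Nat.nth Nat.Prime (i : ℕ) := by
    have := Real.log_injOn_pos (Set.mem_Ioi.mpr (hprodpos σ₁))
      (Set.mem_Ioi.mpr (hprodpos σ₂)) hA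
    exact_mod_cast this
  have hSets : (Finset.univ.filter fun i => σ₁ i = 1)
      = Finset.univ.filter fun i => σ₂ i = 1 :=
    Finset.ext fun i => ⟨fun h => prod_nth_prime_mem _ _ hprod i h,
      fun h => prod_nth_prime_mem _ _ hprod.symm i h⟩
  funext i
  have hmem : σ₁ i = 1 ↔ σ₂ i = 1 := by
    have := Finset.ext_iff.mp hSets i
    simpa using this
  have h01 : ∀ x : Fin 2, x = 0 ∨ x = 1 := by decide
  rcases h01 (σ₁ i) with h1 | h1 <;> rcases h01 (σ₂ i) with h2 | h2 <;>
    simp_all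
end
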